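/- arXiv:2506.00097 — 4 statements merged into one kernel-verified Lean document; each statement's English description precedes it below -/
import Mathlib

section
/- Let u = (a, b) and w = (c, d) be vectors in ℂ², and let ψ : Fin 2 × Fin 2 → ℂ be the state obtained by applying CNOT to the product state u ⊗ w, i.e., ψ(0,0) = a·c, ψ(0,1) = a·d, ψ(1,0) = b·d, ψ(1,1) = b·c. Then ψ is a simple tensor (∃ u', w', ∀ i j, ψ(i,j) = u' i * w' j) if and only if a·b·(c² − d²) = 0. In particular, for u = R_y(θ₁)e₀ and w = R_y(θ₂)e₀ with θ₁, θ₂ ∈ ℝ, the output state is a simple tensor if and only if sin θ₁ · cos θ₂ = 0, so CNOT produces an entangled state whenever sin θ₁ · cos θ₂ ≠ 0. -/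
/-- Applying CNOT to the product state (a,b) ⊗ (c,d) gives the state with
amplitudes ψ(0,0)=ac, ψ(0,1)=ad, ψ(1,0)=bd, ψ(1,1)=bc. -/
def cnotOut (a b c d : ℂ) : Fin 2 × Fin 2 → ℂ :=
  fun p => !![a * c, a * d; b * d, b * c] p.1 p.2

lemma main_aux (a b c d : ℂ) :
    (∃ u' w' : Fin 2 → ℂ, ∀ i j : Fin 2, cnotOut a b c d (i, j) = u' i * w' j) ↔
      a * b * (c ^ 2 - d ^ 2) = 0 := by
  constructor
  · rintro ⟨u, w, h⟩
    have h00 := h 0 0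
    have h01 := h 0 1
    have h10 := h 1 0
    have h11 := h 1 1
    simp [cnotOut] at h00 h01 h10 h11
    have key : a * b * (c ^ 2 - d ^ 2)
        = u 0 * w 0 * (u 1 * w 1) - u 0 * w 1 * (u 1 * w 0) := by
      rw [← h00, ← h11, ← h01, ← h10]; ring
    rw [key]; ring
  · intro h
    rcases mul_eq_zero.mp h with hab | hcd
    · rcases mul_eq_zero.mp hab with ha | hb
      · exact ⟨![0, b], ![d, c], by
          intro i j; fin_cases i <;> fin_cases j <;> simp [cnotOut, ha]⟩
      · exact ⟨![a, 0], ![c, d], by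
          intro i j; fin_cases i <;> fin_cases j <;> simp [cnotOut, hb]⟩
    · have : (c - d) * (c + d) = 0 := by linear_combination hcd
      rcases mul_eq_zero.mp this with h1 | h2
      · have hcd' : c = d := by linear_combination h1
        exact ⟨![a, b], ![c, c], by
          intro i j; fin_cases i <;> fin_cases j <;> simp [cnotOut, hcd']⟩
      · have hcd' : d = -c := by linear_combination h2
        exact ⟨![a, -b], ![c, -c], by
          intro i j; fin_cases i <;> fin_cases j <;> simp [cnotOut, hcd']⟩

/-- The CNOT output of a product state is a simple tensor iff
a·b·(c² − d²) = 0; in particular, for inputs R_y(θ₁)e₀ and R_y(θ₂)e₀ this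
holds iff sin θ₁ · cos θ₂ = 0 (so CNOT entangles whenever
sin θ₁ · cos θ₂ ≠ 0). -/
theorem stmt7 :
    (∀ a b c d : ℂ,
      (∃ u' w' : Fin 2 → ℂ, ∀ i j : Fin 2, cnotOut a b c d (i, j) = u' i * w' j) ↔
        a * b * (c ^ 2 - d ^ 2) = 0) ∧
    (∀ θ₁ θ₂ : ℝ,
      ((∃ u' w' : Fin 2 → ℂ, ∀ i j : Fin 2,
          cnotOut (Real.cos (θ₁ / 2)) (Real.sin (θ₁ / 2))
            (Real.cos (θ₂ / 2)) (Real.sin (θ₂ / 2)) (i, j) = u' i * w' j) ↔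
        Real.sin θ₁ * Real.cos θ₂ = 0)) := by
  refine ⟨main_aux, fun θ₁ θ₂ => ?_⟩
  rw [main_aux]
  have r : Real.sin θ₁ * Real.cos θ₂
      = 2 * (Real.cos (θ₁ / 2) * Real.sin (θ₁ / 2)
          * (Real.cos (θ₂ / 2) ^ 2 - Real.sin (θ₂ / 2) ^ 2)) := by
    have h1 : Real.sin θ₁ = 2 * Real.sin (θ₁ / 2) * Real.cos (θ₁ / 2) := by
      rw [← Real.sin_two_mul]; ring_nf
    have h2 : Real.cos θ₂ = Real.cos (θ₂ / 2) ^ 2 - Real.sin (θ₂ / 2) ^ 2 := by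
      have h := Real.cos_two_mul (θ₂ / 2)
      have h' := Real.sin_sq_add_cos_sq (θ₂ / 2)
      have : 2 * (θ₂ / 2) = θ₂ := by ring
      rw [this] at h
      nlinarith [h, h']
    rw [h1, h2]; ring
  constructor
  · intro h
    have : ((Real.sin θ₁ * Real.cos θ₂ : ℝ) : ℂ) = 0 := by
      rw [r]; push_cast [-Complex.ofReal_cos, -Complex.ofReal_sin]; linear_combination 2 * h
    exact_mod_cast this
  · intro h
    have : ((Real.sin θ₁ * Real.cos θ₂ : ℝ) : ℂ) = 0 := by exact_mod_cast h
    rw [r] at this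
    push_cast [-Complex.ofReal_cos, -Complex.ofReal_sin] at this
    linear_combination this / 2
end

section
/- Let θ₁, θ₂ ∈ ℝ and let ψ be the state obtained by applying CNOT to (R_y(θ₁)e₀) ⊗ (R_y(θ₂)e₀), with measurement probabilities P(k₁,k₂) = ‖ψ(k₁,k₂)‖² over bit pairs (k₁,k₂) ∈ Fin 2 × Fin 2. Define E₁ = Σ P(k₁,k₂)·k₁, E₂ = Σ P(k₁,k₂)·k₂ and E₁₂ = Σ P(k₁,k₂)·k₁·k₂ (sums over all four outcomes, bits cast to ℝ). Then the covariance of the two measured bits satisfies E₁₂ − E₁·E₂ = (1/4)·sin²(θ₁)·cos(θ₂); in particular the measured bits are correlated exactly when sin θ₁ · cos θ₂ ≠ 0. -/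
open Finset

/-- The state obtained by applying CNOT to (R_y(θ₁)e₀) ⊗ (R_y(θ₂)e₀):
with a = cos(θ₁/2), b = sin(θ₁/2), c = cos(θ₂/2), d = sin(θ₂/2) the
amplitudes are ψ(0,0)=ac, ψ(0,1)=ad, ψ(1,0)=bd, ψ(1,1)=bc. -/
noncomputable def cnotRyState (θ₁ θ₂ : ℝ) : Fin 2 × Fin 2 → ℂ :=
  fun p =>
    !![(Real.cos (θ₁ / 2) * Real.cos (θ₂ / 2) : ℝ),
       (Real.cos (θ₁ / 2) * Real.sin (θ₂ / 2) : ℝ);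
       (Real.sin (θ₁ / 2) * Real.sin (θ₂ / 2) : ℝ),
       (Real.sin (θ₁ / 2) * Real.cos (θ₂ / 2) : ℝ)] p.1 p.2

/-- Measurement probabilities of the CNOT-entangled two-qubit state. -/
noncomputable def Pmeas (θ₁ θ₂ : ℝ) (k : Fin 2 × Fin 2) : ℝ :=
  ‖cnotRyState θ₁ θ₂ k‖ ^ 2

/-- The covariance of the two measured bits equals (1/4)·sin²θ₁·cosθ₂; in
particular the bits are correlated exactly when sin θ₁ · cos θ₂ ≠ 0. -/
theorem stmt8 (θ₁ θ₂ : ℝ) :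
    (∑ k : Fin 2 × Fin 2, Pmeas θ₁ θ₂ k * ((k.1 : ℕ) : ℝ) * ((k.2 : ℕ) : ℝ)) -
      (∑ k : Fin 2 × Fin 2, Pmeas θ₁ θ₂ k * ((k.1 : ℕ) : ℝ)) *
      (∑ k : Fin 2 × Fin 2, Pmeas θ₁ θ₂ k * ((k.2 : ℕ) : ℝ)) =
      (1 / 4) * Real.sin θ₁ ^ 2 * Real.cos θ₂ ∧
    ((∑ k : Fin 2 × Fin 2, Pmeas θ₁ θ₂ k * ((k.1 : ℕ) : ℝ) * ((k.2 : ℕ) : ℝ)) -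
      (∑ k : Fin 2 × Fin 2, Pmeas θ₁ θ₂ k * ((k.1 : ℕ) : ℝ)) *
      (∑ k : Fin 2 × Fin 2, Pmeas θ₁ θ₂ k * ((k.2 : ℕ) : ℝ)) ≠ 0 ↔
      Real.sin θ₁ * Real.cos θ₂ ≠ 0) := by
  have key : (∑ k : Fin 2 × Fin 2, Pmeas θ₁ θ₂ k * ((k.1 : ℕ) : ℝ) * ((k.2 : ℕ) : ℝ)) -
      (∑ k : Fin 2 × Fin 2, Pmeas θ₁ θ₂ k * ((k.1 : ℕ) : ℝ)) *
      (∑ k : Fin 2 × Fin 2, Pmeas θ₁ θ₂ k * ((k.2 : ℕ) : ℝ)) =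
      (1 / 4) * Real.sin θ₁ ^ 2 * Real.cos θ₂ := by
    have h1 : Real.sin θ₁ = 2 * Real.sin (θ₁/2) * Real.cos (θ₁/2) := by
      rw [← Real.sin_two_mul]; ring_nf
    have h2' := Real.cos_two_mul (θ₂/2)
    rw [show (2:ℝ)*(θ₂/2) = θ₂ by ring] at h2'
    have p1 := Real.sin_sq_add_cos_sq (θ₁/2)
    have p2 := Real.sin_sq_add_cos_sq (θ₂/2)
    simp [Pmeas, cnotRyState, Fintype.sum_prod_type, Fin.sum_univ_two,
      Complex.norm_real, sq_abs, h1, h2']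
    linear_combination (-(Real.sin (θ₁/2)^2 * Real.cos (θ₂/2)^2)) * p1 +
      (-(Real.sin (θ₁/2)^2 * Real.cos (θ₁/2)^2) -
        Real.sin (θ₁/2)^2 * (Real.cos (θ₁/2)^2 * Real.sin (θ₂/2)^2 +
          Real.sin (θ₁/2)^2 * Real.cos (θ₂/2)^2)) * p2
  refine ⟨key, ?_⟩
  rw [key]
  constructor
  · intro h hsc
    apply h
    rcases mul_eq_zero.mp hsc with h' | h'
    · rw [h']; ring
    · rw [h']; ring
  · intro h h0
    apply h
    have : Real.sin θ₁ ^ 2 * Real.cos θ₂ = 0 := by linarith [h0]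
    rcases mul_eq_zero.mp this with h' | h'
    · rw [pow_eq_zero_iff (by norm_num) |>.mp h', zero_mul]
    · rw [h', mul_zero]
end

section
/- Let p₁, p₂, p₃ ∈ [0,1] and consider three independent bits b₁, b₂, b₃ with P(bᵢ = 1) = pᵢ. Let the output bits after a cross CNOT with control qubit 1 and target qubit 3 be (B₁, B₂, B₃) = (b₁, b₂, b₁ XOR b₃), with the induced distribution Q on (Fin 2)³ given by Q(c₁,c₂,c₃) = Σ over (b₁,b₂,b₃) with (b₁, b₂, b₁ XOR b₃) = (c₁,c₂,c₃) of ∏ᵢ pᵢ^{bᵢ}(1−pᵢ)^{1−bᵢ}. Then Cov(B₁, B₃) := E_Q[B₁B₃] − E_Q[B₁]·E_Q[B₃] = p₁(1−p₁)(1−2p₃), while Cov(B₁, B₂) = 0 and Cov(B₂, B₃) = 0. -/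
open Finset

/-- Bernoulli weight of a bit: p if the bit is 1, and 1 − p if it is 0. -/
def bw (p : ℝ) (b : Fin 2) : ℝ := if b = 1 then p else 1 - p

/-- The distribution induced on the output bits (b₁, b₂, b₁ XOR b₃) of a cross
CNOT applied to three independent Bernoulli bits. -/
def Qdist (p₁ p₂ p₃ : ℝ) (c : Fin 2 × Fin 2 × Fin 2) : ℝ :=
  ∑ b ∈ Finset.univ.filter
      (fun b : Fin 2 × Fin 2 × Fin 2 => (b.1, b.2.1, b.1 + b.2.2) = c),
    bw p₁ b.1 * bw p₂ b.2.1 * bw p₃ b.2.2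

/-- Cross CNOT induces covariance p₁(1−p₁)(1−2p₃) between the control bit B₁
and output target bit B₃, while Cov(B₁,B₂) = 0 and Cov(B₂,B₃) = 0. -/
theorem stmt9 (p₁ p₂ p₃ : ℝ)
    (h₁ : p₁ ∈ Set.Icc (0 : ℝ) 1) (h₂ : p₂ ∈ Set.Icc (0 : ℝ) 1)
    (h₃ : p₃ ∈ Set.Icc (0 : ℝ) 1) :
    (∑ c : Fin 2 × Fin 2 × Fin 2,
        Qdist p₁ p₂ p₃ c * ((c.1 : ℕ) : ℝ) * ((c.2.2 : ℕ) : ℝ)) -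
      (∑ c : Fin 2 × Fin 2 × Fin 2, Qdist p₁ p₂ p₃ c * ((c.1 : ℕ) : ℝ)) *
      (∑ c : Fin 2 × Fin 2 × Fin 2, Qdist p₁ p₂ p₃ c * ((c.2.2 : ℕ) : ℝ)) =
      p₁ * (1 - p₁) * (1 - 2 * p₃) ∧
    (∑ c : Fin 2 × Fin 2 × Fin 2,
        Qdist p₁ p₂ p₃ c * ((c.1 : ℕ) : ℝ) * ((c.2.1 : ℕ) : ℝ)) -
      (∑ c : Fin 2 × Fin 2 × Fin 2, Qdist p₁ p₂ p₃ c * ((c.1 : ℕ) : ℝ)) *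
      (∑ c : Fin 2 × Fin 2 × Fin 2, Qdist p₁ p₂ p₃ c * ((c.2.1 : ℕ) : ℝ)) = 0 ∧
    (∑ c : Fin 2 × Fin 2 × Fin 2,
        Qdist p₁ p₂ p₃ c * ((c.2.1 : ℕ) : ℝ) * ((c.2.2 : ℕ) : ℝ)) -
      (∑ c : Fin 2 × Fin 2 × Fin 2, Qdist p₁ p₂ p₃ c * ((c.2.1 : ℕ) : ℝ)) *
      (∑ c : Fin 2 × Fin 2 × Fin 2, Qdist p₁ p₂ p₃ c * ((c.2.2 : ℕ) : ℝ)) = 0 := by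
  refine ⟨?_, ?_, ?_⟩ <;>
  · simp only [Qdist, bw, Fintype.sum_prod_type, Fin.sum_univ_two,
      Finset.sum_filter]
    simp only [Fin.isValue, Prod.mk.injEq, Fin.reduceAdd, Fin.reduceEq,
      and_true, and_false, true_and, false_and, if_true, if_false,
      Fin.val_zero, Fin.val_one, Nat.cast_zero, Nat.cast_one,
      mul_zero, mul_one, zero_add, add_zero, if_pos, if_neg]
    ring
end

section
/- Let n be a natural number, p : Fin n → ℝ with 0 ≤ p i ≤ 1 for all i, and for a bitstring k : Fin n → Fin 2 define P(k) = ∏_{i} (p i)^(k i) · (1 − p i)^(1 − k i) and val(k) = Σ_{i} 2^i · (k i : ℝ). Then the variance of the decoded value factorizes across qubits: Σ_k P(k)·val(k)² − (Σ_k P(k)·val(k))² = Σ_{i : Fin n} 4^i · (p i) · (1 − p i). -/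
open Finset

private def Pf {n : ℕ} (p : Fin n → ℝ) (k : Fin n → Fin 2) : ℝ :=
  ∏ i : Fin n, (p i) ^ ((k i : ℕ)) * (1 - p i) ^ (1 - (k i : ℕ))

private def Vf {n : ℕ} (k : Fin n → Fin 2) : ℝ :=
  ∑ i : Fin n, (2 : ℝ) ^ (i : ℕ) * ((k i : ℕ) : ℝ)

private lemma sum_pi_succ {n : ℕ} (F : (Fin (n+1) → Fin 2) → ℝ) :
    ∑ k, F k = ∑ b : Fin 2, ∑ k : Fin n → Fin 2, F (Fin.cons b k) := by
  rw [Fintype.sum_equiv (Fin.consEquiv (fun _ => Fin 2))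
    (fun x => F (Fin.cons x.1 x.2)) F (fun x => rfl) |>.symm]
  rw [Fintype.sum_prod_type]

private lemma Pf_cons {n : ℕ} (p : Fin (n+1) → ℝ) (b : Fin 2) (k : Fin n → Fin 2) :
    Pf p (Fin.cons b k) =
      ((p 0) ^ (b : ℕ) * (1 - p 0) ^ (1 - (b : ℕ))) * Pf (p ∘ Fin.succ) k := by
  simp [Pf, Fin.prod_univ_succ]

private lemma Vf_cons {n : ℕ} (b : Fin 2) (k : Fin n → Fin 2) :
    Vf (Fin.cons b k) = ((b : ℕ) : ℝ) + 2 * Vf k := by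
  simp only [Vf, Fin.sum_univ_succ, Fin.cons_zero, Fin.cons_succ, Fin.val_zero, pow_zero,
    one_mul, Fin.val_succ, pow_succ, mul_sum]
  congr 1
  exact Finset.sum_congr rfl fun i _ => by ring

private lemma tail_sum2 {n : ℕ} (p : Fin (n+1) → ℝ) :
    ∑ i : Fin (n+1), (2:ℝ) ^ (i:ℕ) * p i
      = p 0 + 2 * ∑ i : Fin n, (2:ℝ) ^ (i:ℕ) * (p ∘ Fin.succ) i := by
  rw [Fin.sum_univ_succ, Finset.mul_sum]
  simp only [Fin.val_zero, pow_zero, one_mul, Function.comp]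
  congr 1
  exact Finset.sum_congr rfl fun i _ => by rw [Fin.val_succ, pow_succ]; ring

private lemma tail_sum4 {n : ℕ} (p : Fin (n+1) → ℝ) :
    ∑ i : Fin (n+1), (4:ℝ) ^ (i:ℕ) * p i * (1 - p i)
      = p 0 * (1 - p 0) + 4 * ∑ i : Fin n, (4:ℝ) ^ (i:ℕ) * (p ∘ Fin.succ) i * (1 - (p ∘ Fin.succ) i) := by
  rw [Fin.sum_univ_succ, Finset.mul_sum]
  simp only [Fin.val_zero, pow_zero, one_mul, Function.comp]
  congr 1
  exact Finset.sum_congr rfl fun i _ => by rw [Fin.val_succ, pow_succ]; ring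

private lemma sumPf : ∀ (n : ℕ) (p : Fin n → ℝ), ∑ k : Fin n → Fin 2, Pf p k = 1
  | 0, p => by simp [Pf]
  | (n+1), p => by
    rw [sum_pi_succ]
    have ih := sumPf n (p ∘ Fin.succ)
    simp only [Pf_cons, ← Finset.mul_sum, ih, mul_one, Fin.sum_univ_two]
    norm_num

private lemma sumE1 : ∀ (n : ℕ) (p : Fin n → ℝ),
    ∑ k : Fin n → Fin 2, Pf p k * Vf k = ∑ i : Fin n, (2:ℝ) ^ (i:ℕ) * p i
  | 0, p => by simp [Pf, Vf]
  | (n+1), p => by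
    rw [sum_pi_succ]
    have ih := sumE1 n (p ∘ Fin.succ)
    have h0 := sumPf n (p ∘ Fin.succ)
    have key : ∀ b : Fin 2, ∑ k : Fin n → Fin 2, Pf p (Fin.cons b k) * Vf (Fin.cons b k)
        = ((p 0) ^ (b:ℕ) * (1 - p 0) ^ (1 - (b:ℕ))) *
            (((b:ℕ):ℝ) + 2 * (∑ i : Fin n, (2:ℝ) ^ (i:ℕ) * (p ∘ Fin.succ) i)) := by
      intro b
      have expand : ∀ k : Fin n → Fin 2,
          Pf p (Fin.cons b k) * Vf (Fin.cons b k)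
            = ((p 0) ^ (b:ℕ) * (1 - p 0) ^ (1 - (b:ℕ)) * ((b:ℕ):ℝ)) * Pf (p ∘ Fin.succ) k
              + ((p 0) ^ (b:ℕ) * (1 - p 0) ^ (1 - (b:ℕ)) * 2) * (Pf (p ∘ Fin.succ) k * Vf k) :=
        fun k => by rw [Pf_cons, Vf_cons]; ring
      rw [Finset.sum_congr rfl (fun k _ => expand k), Finset.sum_add_distrib,
        ← Finset.mul_sum, ← Finset.mul_sum, h0, ih]
      ring
    rw [Finset.sum_congr rfl (fun b _ => key b), Fin.sum_univ_two, tail_sum2]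
    norm_num
    ring
  termination_by n => n

private lemma sumE2 : ∀ (n : ℕ) (p : Fin n → ℝ),
    ∑ k : Fin n → Fin 2, Pf p k * (Vf k) ^ 2 =
      (∑ i : Fin n, (2:ℝ) ^ (i:ℕ) * p i) ^ 2 + ∑ i : Fin n, (4:ℝ) ^ (i:ℕ) * p i * (1 - p i)
  | 0, p => by simp [Pf, Vf]
  | (n+1), p => by
    rw [sum_pi_succ]
    have ih := sumE2 n (p ∘ Fin.succ)
    have ih1 := sumE1 n (p ∘ Fin.succ)
    have h0 := sumPf n (p ∘ Fin.succ)
    have key : ∀ b : Fin 2, ∑ k : Fin n → Fin 2, Pf p (Fin.cons b k) * (Vf (Fin.cons b k))^2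
        = ((p 0) ^ (b:ℕ) * (1 - p 0) ^ (1 - (b:ℕ))) *
            ((((b:ℕ):ℝ))^2 + 4 * ((b:ℕ):ℝ) * (∑ i : Fin n, (2:ℝ) ^ (i:ℕ) * (p ∘ Fin.succ) i)
              + 4 * ((∑ i : Fin n, (2:ℝ) ^ (i:ℕ) * (p ∘ Fin.succ) i)^2
                  + ∑ i : Fin n, (4:ℝ) ^ (i:ℕ) * (p ∘ Fin.succ) i * (1 - (p ∘ Fin.succ) i))) := by
      intro b
      have expand : ∀ k : Fin n → Fin 2,
          Pf p (Fin.cons b k) * (Vf (Fin.cons b k))^2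
            = ((p 0) ^ (b:ℕ) * (1 - p 0) ^ (1 - (b:ℕ)) * (((b:ℕ):ℝ))^2) * Pf (p ∘ Fin.succ) k
              + ((p 0) ^ (b:ℕ) * (1 - p 0) ^ (1 - (b:ℕ)) * (4 * ((b:ℕ):ℝ))) * (Pf (p ∘ Fin.succ) k * Vf k)
              + ((p 0) ^ (b:ℕ) * (1 - p 0) ^ (1 - (b:ℕ)) * 4) * (Pf (p ∘ Fin.succ) k * (Vf k)^2) :=
        fun k => by rw [Pf_cons, Vf_cons]; ring
      rw [Finset.sum_congr rfl (fun k _ => expand k), Finset.sum_add_distrib,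
        Finset.sum_add_distrib, ← Finset.mul_sum, ← Finset.mul_sum, ← Finset.mul_sum,
        h0, ih1, ih]
      ring
    rw [Finset.sum_congr rfl (fun b _ => key b), Fin.sum_univ_two, tail_sum2, tail_sum4]
    norm_num
    ring

/-- The variance of the decoded value of the rotation-only circuit factorizes
across qubits: Σ_k P(k)·val(k)² − (Σ_k P(k)·val(k))² = Σᵢ 4^i pᵢ(1−pᵢ). -/
theorem stmt11 (n : ℕ) (p : Fin n → ℝ) (hp : ∀ i, 0 ≤ p i ∧ p i ≤ 1) :
    (∑ k : Fin n → Fin 2,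
        (∏ i : Fin n, (p i) ^ ((k i : ℕ)) * (1 - p i) ^ (1 - (k i : ℕ))) *
        (∑ i : Fin n, (2 : ℝ) ^ (i : ℕ) * ((k i : ℕ) : ℝ)) ^ 2) -
      (∑ k : Fin n → Fin 2,
        (∏ i : Fin n, (p i) ^ ((k i : ℕ)) * (1 - p i) ^ (1 - (k i : ℕ))) *
        (∑ i : Fin n, (2 : ℝ) ^ (i : ℕ) * ((k i : ℕ) : ℝ))) ^ 2 =
      ∑ i : Fin n, (4 : ℝ) ^ (i : ℕ) * p i * (1 - p i) := by
  have h2 := sumE2 n p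
  have h1 := sumE1 n p
  simp only [Pf, Vf] at h1 h2
  rw [h1, h2]
  ring
end
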